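/- Let k ≥ 2. Suppose (B_j, c_j), j = 0, 1, 2, …, is a sequence where B₀ is a k×k real symmetric positive definite matrix, c₀ ∈ ℝ^k, and for each j there is a nonzero vector a_j ∈ ℝ^k such that B_{j+1} = (k²/(k²−1))·( B_j − 2(B_j a_j)(B_j a_j)ᵀ/((k+1)·a_jᵀB_j a_j) ) and c_{j+1} = c_j − B_j a_j/((k+1)·√(a_jᵀB_j a_j)). Then for every N, the Lebesgue volume of E(B_N, c_N) is at most exp(−N/(2(k+1))) times the volume of E(B₀, c₀); in particular the volumes of the ellipsoids E(B_j, c_j) tend to zero. -/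

import Mathlib

/-!
The ellipsoid `E(B, c)` is the image of the Euclidean unit ball under `y ↦ c + B^{1/2} y`, so its
volume is `√(det B)` times that of the unit ball, and only determinants have to be tracked. By the
matrix determinant lemma every update multiplies `det B` by
`ρ = (k²/(k²-1))^k (k-1)/(k+1) = (k/(k+1))² (k²/(k²-1))^(k-1)`, and bounding both factors with
`1 + x ≤ eˣ` gives `ρ ≤ e^{-1/(k+1)}`. The updated matrices stay positive definite by the
Cauchy–Schwarz inequality for the form of `B`.
-/

open Matrix MeasureTheory Filter Topology

namespace Matrix

variable {n : Type*} [Fintype n]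

theorem PosDef.real_dotProduct_mulVec_pos {M : Matrix n n ℝ} (hM : M.PosDef) {x : n → ℝ}
    (hx : x ≠ 0) : 0 < x ⬝ᵥ M *ᵥ x := by
  simpa using hM.dotProduct_mulVec_pos hx

theorem PosSemidef.dotProduct_mulVec_sq_le {M : Matrix n n ℝ} (hM : M.PosSemidef) (x y : n → ℝ) :
    (x ⬝ᵥ M *ᵥ y) ^ 2 ≤ (x ⬝ᵥ M *ᵥ x) * (y ⬝ᵥ M *ᵥ y) := by
  let := M.toSeminormedAddCommGroup hM
  let := M.toInnerProductSpace hM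
  have h := real_inner_mul_inner_self_le x y
  change ((M *ᵥ y) ⬝ᵥ star x) * ((M *ᵥ y) ⬝ᵥ star x)
    ≤ ((M *ᵥ x) ⬝ᵥ star x) * ((M *ᵥ y) ⬝ᵥ star y) at h
  simpa only [star_trivial, dotProduct_comm _ x, dotProduct_comm _ y, sq] using h

theorem det_sub_smul_vecMulVec_mulVec {R : Type*} [CommRing R] [DecidableEq n]
    (M : Matrix n n R) (a : n → R) (s : R) :
    (M - s • vecMulVec (M *ᵥ a) (M *ᵥ a)).det = (1 - s * (a ⬝ᵥ M *ᵥ a)) * M.det := by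
  have hfactor : M - s • vecMulVec (M *ᵥ a) (M *ᵥ a)
      = M * (1 + replicateCol Unit (-s • a) * replicateRow Unit (M *ᵥ a)) := by
    rw [← vecMulVec_eq, Matrix.mul_add, mul_vecMulVec, mulVec_smul, Matrix.mul_one,
      smul_vecMulVec, neg_smul, sub_eq_add_neg]
  rw [hfactor, det_mul, det_one_add_replicateCol_mul_replicateRow, dotProduct_smul,
    dotProduct_comm, smul_eq_mul]
  ring

theorem PosDef.sub_smul_vecMulVec_mulVec {M : Matrix n n ℝ} (hM : M.PosDef) (a : n → ℝ) {s : ℝ}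
    (hs : s * (a ⬝ᵥ M *ᵥ a) < 1) : (M - s • vecMulVec (M *ᵥ a) (M *ᵥ a)).PosDef := by
  refine of_dotProduct_mulVec_pos (hM.isHermitian.sub ?_) fun x hx => ?_
  · exact (posSemidef_vecMulVec_self_star (M *ᵥ a)).isHermitian.smul (IsSelfAdjoint.all s)
  · have hq := hM.real_dotProduct_mulVec_pos hx
    have hcs := hM.posSemidef.dotProduct_mulVec_sq_le x a
    have hform : x ⬝ᵥ (M - s • vecMulVec (M *ᵥ a) (M *ᵥ a)) *ᵥ x
        = x ⬝ᵥ M *ᵥ x - s * (x ⬝ᵥ M *ᵥ a) ^ 2 := by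
      simp only [sub_mulVec, smul_mulVec, vecMulVec_mulVec, op_smul_eq_smul, dotProduct_sub,
        dotProduct_smul, smul_eq_mul, dotProduct_comm (M *ᵥ a) x]
      ring
    simp only [star_trivial, hform]
    rcases le_or_gt s 0 with hs0 | hs0
    · nlinarith
    · nlinarith [mul_le_mul_of_nonneg_left hcs hs0.le]

theorem volume_dotProduct_self_le_one_ne_top : volume {y : n → ℝ | y ⬝ᵥ y ≤ 1} ≠ ⊤ := by
  refine ((Metric.isBounded_closedBall (x := 0) (r := 1)).subset fun y hy => ?_).measure_lt_top.ne
  rw [Metric.mem_closedBall, dist_zero_right, pi_norm_le_iff_of_nonneg zero_le_one]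
  intro i
  rw [Real.norm_eq_abs, abs_le_one_iff_mul_self_le_one]
  exact (Finset.single_le_sum (fun j _ => mul_self_nonneg (y j)) (Finset.mem_univ i)).trans hy

section Ellipsoid

variable [DecidableEq n]

def ellipsoid (M : Matrix n n ℝ) (c : n → ℝ) : Set (n → ℝ) :=
  {x | (x - c) ⬝ᵥ M⁻¹ *ᵥ (x - c) ≤ 1}

theorem ellipsoid_mul_self_zero_eq_image {A : Matrix n n ℝ} (hA : A.IsSymm) (hdet : IsUnit A.det) :
    ellipsoid (A * A) 0 = toLin' A '' {y | y ⬝ᵥ y ≤ 1} := by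
  have hAinvA : ∀ v, A⁻¹ *ᵥ A *ᵥ v = v := fun v => by
    rw [mulVec_mulVec, nonsing_inv_mul A hdet, one_mulVec]
  have hAAinv : ∀ v, A *ᵥ A⁻¹ *ᵥ v = v := fun v => by
    rw [mulVec_mulVec, mul_nonsing_inv A hdet, one_mulVec]
  have hquad : ∀ y, (A *ᵥ y) ⬝ᵥ (A * A)⁻¹ *ᵥ (A *ᵥ y) = y ⬝ᵥ y := fun y => by
    rw [Matrix.mul_inv_rev, ← mulVec_mulVec, hAinvA, ← vecMul_transpose, hA.eq,
      ← dotProduct_mulVec, hAAinv]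
  ext x
  simp only [ellipsoid, sub_zero, Set.mem_ofPred_eq, Set.mem_image, toLin'_apply]
  constructor
  · intro hx
    exact ⟨A⁻¹ *ᵥ x, by rwa [← hquad, hAAinv], hAAinv x⟩
  · rintro ⟨y, hy, rfl⟩
    rwa [hquad]

open scoped MatrixOrder in
theorem volume_ellipsoid {M : Matrix n n ℝ} (hM : M.PosDef) (c : n → ℝ) :
    volume (ellipsoid M c) = ENNReal.ofReal √M.det * volume {y : n → ℝ | y ⬝ᵥ y ≤ 1} := by
  have hA : (CFC.sqrt M).PosSemidef := (CFC.sqrt_nonneg M).posSemidef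
  have hdet : (CFC.sqrt M).det = √M.det := by
    rw [hM.posSemidef.det_sqrt, RCLike.sqrt_real]
  have hE : ellipsoid M 0 = toLin' (CFC.sqrt M) '' {y | y ⬝ᵥ y ≤ 1} := by
    rw [← ellipsoid_mul_self_zero_eq_image (isHermitian_iff_isSymm.mp hA.isHermitian)
      (hdet ▸ (Real.sqrt_pos.mpr hM.det_pos).ne'.isUnit),
      CFC.sqrt_mul_sqrt_self M hM.posSemidef.nonneg]
  have htrans : ellipsoid M c = (· + -c) ⁻¹' ellipsoid M 0 := by
    ext x; simp [ellipsoid, sub_eq_add_neg]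
  rw [htrans, measure_preimage_add_right, hE, Measure.addHaar_image_linearMap,
    LinearMap.det_toLin', hdet, abs_of_nonneg (Real.sqrt_nonneg _)]

theorem volume_ellipsoid_ne_top {M : Matrix n n ℝ} (hM : M.PosDef) (c : n → ℝ) :
    volume (ellipsoid M c) ≠ ⊤ := by
  rw [volume_ellipsoid hM]
  exact ENNReal.mul_ne_top ENNReal.ofReal_ne_top volume_dotProduct_self_le_one_ne_top

end Ellipsoid

variable {k : ℕ}

noncomputable def ellipsoidUpdate (M : Matrix (Fin k) (Fin k) ℝ) (a : Fin k → ℝ) :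
    Matrix (Fin k) (Fin k) ℝ :=
  ((k : ℝ) ^ 2 / ((k : ℝ) ^ 2 - 1)) •
    (M - (2 / (((k : ℝ) + 1) * (a ⬝ᵥ M *ᵥ a))) • vecMulVec (M *ᵥ a) (M *ᵥ a))

noncomputable def ellipsoidDetRatio (k : ℕ) : ℝ :=
  ((k : ℝ) ^ 2 / ((k : ℝ) ^ 2 - 1)) ^ k * (((k : ℝ) - 1) / ((k : ℝ) + 1))

theorem ellipsoidDetRatio_pos (hk : 1 < k) : 0 < ellipsoidDetRatio k := by
  have hK : (1 : ℝ) < k := Nat.one_lt_cast.mpr hk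
  have : (0 : ℝ) < (k : ℝ) ^ 2 - 1 := by nlinarith
  unfold ellipsoidDetRatio
  exact mul_pos (pow_pos (div_pos (by positivity) this) k) (div_pos (by linarith) (by positivity))

theorem ellipsoidDetRatio_le_exp (hk : 1 < k) :
    ellipsoidDetRatio k ≤ Real.exp (-1 / ((k : ℝ) + 1)) := by
  set K : ℝ := (k : ℝ)
  have hK : 1 < K := Nat.one_lt_cast.mpr hk
  have hK2 : 0 < K ^ 2 - 1 := by nlinarith
  have hsplit : ellipsoidDetRatio k = (K / (K + 1)) ^ 2 * (K ^ 2 / (K ^ 2 - 1)) ^ (k - 1) := by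
    have hlast : K ^ 2 / (K ^ 2 - 1) * ((K - 1) / (K + 1)) = (K / (K + 1)) ^ 2 := by
      field_simp
      ring
    rw [ellipsoidDetRatio, ← pow_sub_one_mul (by omega) (K ^ 2 / (K ^ 2 - 1)), mul_assoc, hlast,
      mul_comm]
  have hfirst : K / (K + 1) ≤ Real.exp (-1 / (K + 1)) := by
    convert Real.add_one_le_exp (-1 / (K + 1)) using 1
    field_simp
    ring
  have hsecond : K ^ 2 / (K ^ 2 - 1) ≤ Real.exp (1 / (K ^ 2 - 1)) := by
    convert Real.add_one_le_exp (1 / (K ^ 2 - 1)) using 1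
    field_simp
    ring
  calc ellipsoidDetRatio k
      ≤ Real.exp (-1 / (K + 1)) ^ 2 * Real.exp (1 / (K ^ 2 - 1)) ^ (k - 1) := by
        rw [hsplit]; gcongr
    _ = Real.exp (-1 / (K + 1)) := by
        rw [← Real.exp_nat_mul, ← Real.exp_nat_mul, ← Real.exp_add, Nat.cast_sub hk.le]
        congr 1
        field_simp
        ring

theorem sqrt_ellipsoidDetRatio_pow_le (hk : 1 < k) (N : ℕ) :
    √(ellipsoidDetRatio k ^ N) ≤ Real.exp (-(N : ℝ) / (2 * ((k : ℝ) + 1))) := by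
  refine Real.sqrt_le_iff.mpr ⟨(Real.exp_pos _).le, ?_⟩
  calc ellipsoidDetRatio k ^ N ≤ Real.exp (-1 / ((k : ℝ) + 1)) ^ N :=
        pow_le_pow_left₀ (ellipsoidDetRatio_pos hk).le (ellipsoidDetRatio_le_exp hk) N
    _ = Real.exp (-(N : ℝ) / (2 * ((k : ℝ) + 1))) ^ 2 := by
        rw [← Real.exp_nat_mul, ← Real.exp_nat_mul]
        congr 1
        push_cast
        field_simp

theorem PosDef.ellipsoidUpdate {M : Matrix (Fin k) (Fin k) ℝ} (hk : 1 < k) (hM : M.PosDef)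
    {a : Fin k → ℝ} (ha : a ≠ 0) : (ellipsoidUpdate M a).PosDef := by
  have hK : (1 : ℝ) < k := Nat.one_lt_cast.mpr hk
  have hα := hM.real_dotProduct_mulVec_pos ha
  have hshrink : 2 / (((k : ℝ) + 1) * (a ⬝ᵥ M *ᵥ a)) * (a ⬝ᵥ M *ᵥ a) < 1 := by
    rw [div_mul_eq_div_div, div_mul_cancel₀ _ hα.ne', div_lt_one (by positivity)]
    linarith
  exact (hM.sub_smul_vecMulVec_mulVec a hshrink).smul (div_pos (by positivity) (by nlinarith))

theorem det_ellipsoidUpdate (M : Matrix (Fin k) (Fin k) ℝ) {a : Fin k → ℝ}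
    (ha : a ⬝ᵥ M *ᵥ a ≠ 0) : (ellipsoidUpdate M a).det = ellipsoidDetRatio k * M.det := by
  have hfactor : 1 - 2 / (((k : ℝ) + 1) * (a ⬝ᵥ M *ᵥ a)) * (a ⬝ᵥ M *ᵥ a)
      = ((k : ℝ) - 1) / ((k : ℝ) + 1) := by
    field_simp
    ring
  rw [ellipsoidUpdate, det_smul, det_sub_smul_vecMulVec_mulVec, hfactor, Fintype.card_fin,
    ellipsoidDetRatio, mul_assoc]

end Matrix

theorem ellipsoid_method_volumes_shrink_general
    (k : ℕ) (hk : 2 ≤ k)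
    (B : ℕ → Matrix (Fin k) (Fin k) ℝ) (c : ℕ → Fin k → ℝ) (a : ℕ → Fin k → ℝ)
    (hB0 : (B 0).PosDef)
    (ha : ∀ j, a j ≠ 0)
    (hBrec : ∀ j, B (j + 1) = ((k : ℝ) ^ 2 / ((k : ℝ) ^ 2 - 1)) •
      (B j - (2 / (((k : ℝ) + 1) * (a j ⬝ᵥ (B j).mulVec (a j)))) •
        vecMulVec ((B j).mulVec (a j)) ((B j).mulVec (a j)))) :
    (∀ N : ℕ,
      volume {x : Fin k → ℝ | (x - c N) ⬝ᵥ (B N)⁻¹.mulVec (x - c N) ≤ 1} ≤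
        ENNReal.ofReal (Real.exp (-(N : ℝ) / (2 * ((k : ℝ) + 1)))) *
          volume {x : Fin k → ℝ | (x - c 0) ⬝ᵥ (B 0)⁻¹.mulVec (x - c 0) ≤ 1}) ∧
    Filter.Tendsto
      (fun j : ℕ => volume {x : Fin k → ℝ | (x - c j) ⬝ᵥ (B j)⁻¹.mulVec (x - c j) ≤ 1})
      Filter.atTop (nhds 0) := by
  have hB : ∀ j, B (j + 1) = ellipsoidUpdate (B j) (a j) := hBrec
  have hPD : ∀ j, (B j).PosDef := fun j => by
    induction j with
    | zero => exact hB0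
    | succ j ih => rw [hB j]; exact ih.ellipsoidUpdate hk (ha j)
  have hdet : ∀ j, (B j).det = ellipsoidDetRatio k ^ j * (B 0).det := fun j => by
    induction j with
    | zero => rw [pow_zero, one_mul]
    | succ j ih =>
      rw [hB j, det_ellipsoidUpdate _ ((hPD j).real_dotProduct_mulVec_pos (ha j)).ne', ih,
        pow_succ]
      ring
  have hshrink : ∀ N : ℕ, volume (ellipsoid (B N) (c N)) ≤
      ENNReal.ofReal (Real.exp (-(N : ℝ) / (2 * ((k : ℝ) + 1)))) *
        volume (ellipsoid (B 0) (c 0)) := by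
    intro N
    rw [volume_ellipsoid (hPD N), volume_ellipsoid hB0, hdet N,
      Real.sqrt_mul (pow_nonneg (ellipsoidDetRatio_pos hk).le N), ← mul_assoc,
      ← ENNReal.ofReal_mul (Real.exp_nonneg _)]
    gcongr
    exact sqrt_ellipsoidDetRatio_pow_le hk N
  refine ⟨hshrink, tendsto_of_tendsto_of_tendsto_of_le_of_le tendsto_const_nhds ?_
    (fun _ => zero_le) hshrink⟩
  have hexp : Tendsto (fun N : ℕ => Real.exp (-(N : ℝ) / (2 * ((k : ℝ) + 1)))) atTop (𝓝 0) :=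
    Real.tendsto_exp_atBot.comp <| (tendsto_neg_atTop_atBot.comp
      tendsto_natCast_atTop_atTop).atBot_div_const (by positivity)
  simpa using ENNReal.Tendsto.mul_const (ENNReal.tendsto_ofReal hexp)
    (Or.inr (volume_ellipsoid_ne_top hB0 (c 0)))

/-- Iterating the ellipsoid-method update, the volume of the `N`-th
ellipsoid is at most `exp(-N/(2(k+1)))` times the volume of the initial one; in
particular the volumes tend to zero. -/
theorem ellipsoid_method_volumes_shrink
    (k : ℕ) (hk : 2 ≤ k)
    (B : ℕ → Matrix (Fin k) (Fin k) ℝ) (c : ℕ → Fin k → ℝ) (a : ℕ → Fin k → ℝ)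
    (hB0 : (B 0).PosDef)
    (ha : ∀ j, a j ≠ 0)
    (hBrec : ∀ j, B (j + 1) = ((k : ℝ) ^ 2 / ((k : ℝ) ^ 2 - 1)) •
      (B j - (2 / (((k : ℝ) + 1) * (a j ⬝ᵥ (B j).mulVec (a j)))) •
        vecMulVec ((B j).mulVec (a j)) ((B j).mulVec (a j))))
    (hcrec : ∀ j, c (j + 1) = c j -
      (((k : ℝ) + 1) * Real.sqrt (a j ⬝ᵥ (B j).mulVec (a j)))⁻¹ • (B j).mulVec (a j)) :
    (∀ N : ℕ,
      volume {x : Fin k → ℝ | (x - c N) ⬝ᵥ (B N)⁻¹.mulVec (x - c N) ≤ 1} ≤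
        ENNReal.ofReal (Real.exp (-(N : ℝ) / (2 * ((k : ℝ) + 1)))) *
          volume {x : Fin k → ℝ | (x - c 0) ⬝ᵥ (B 0)⁻¹.mulVec (x - c 0) ≤ 1}) ∧
    Filter.Tendsto
      (fun j : ℕ => volume {x : Fin k → ℝ | (x - c j) ⬝ᵥ (B j)⁻¹.mulVec (x - c j) ≤ 1})
      Filter.atTop (nhds 0) :=
  ellipsoid_method_volumes_shrink_general k hk B c a hB0 ha hBrec
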